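/- (Identity (17) of the paper.) Fix integers n ≥ 1, m ≥ 2, A ∈ ℝ^{n×n}, C = (1,0,…,0) ∈ ℝ^{1×n}, F = A⊗I_m, H = C⊗V̄, D = (1/m)C(I_n⊗1_mᵀ). Let (L̂_j)_{j≥1} be any matrices in ℝ^{n(m-1)×(m-1)} and Γ ∈ ℝ^{n×n(m-1)}. Set G_j(Γ) = ((I_n⊗V̄†) + (I_n⊗1_m)Γ)L̂_j, and for i ≤ k let λ_i^k(Γ) = (F + G_k(Γ)H)(F + G_{k-1}(Γ)H)⋯(F + G_{i+1}(Γ)H) (with λ_k^k = I_{nm}); let Φ_s^i = H·(F + (I_n⊗V̄†)L̂_{s-1}H)⋯(F + (I_n⊗V̄†)L̂_{i+1}H) for s > i+1 and Φ_{i+1}^i = H. Then for all i < k: D·λ_i^k(Γ) = C·Σ_{δ=0}^{k-i-1} A^δ Γ L̂_{k-δ} Φ_{k-δ}^i + (1/m)·C A^{k-i} (I_n⊗1_mᵀ). In particular the map Γ ↦ D·λ_i^k(Γ) is affine in Γ. -/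

import Mathlib

open Matrix
open scoped Kronecker Matrix

noncomputable section

/-- `V̄ = [I_{m-1}  -1_{m-1}] ∈ ℝ^{(m-1)×m}`. -/
def Vbar (m : ℕ) : Matrix (Fin (m-1)) (Fin m) ℝ :=
  Matrix.of fun i j => if (j : ℕ) = m - 1 then -1 else if (j : ℕ) = (i : ℕ) then 1 else 0

/-- The Moore–Penrose inverse `V̄† = V̄ᵀ(V̄V̄ᵀ)⁻¹`. -/
def Vdag (m : ℕ) : Matrix (Fin m) (Fin (m-1)) ℝ :=
  (Vbar m)ᵀ * (Vbar m * (Vbar m)ᵀ)⁻¹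

/-- The all-ones column vector `1_k`, as a `k × 1` matrix. -/
def onesCol (k : ℕ) : Matrix (Fin k) (Fin 1) ℝ := Matrix.of fun _ _ => 1

/-- `I_n ⊗ 1_m`, as an `(nm) × n` matrix. -/
def onesK (n m : ℕ) : Matrix (Fin n × Fin m) (Fin n) ℝ :=
  Matrix.of fun p j => if p.1 = j then 1 else 0

/-- `C = (1,0,…,0) ∈ ℝ^{1×n}`. -/
def Cmat (n : ℕ) : Matrix (Fin 1) (Fin n) ℝ :=
  Matrix.of fun _ j => if (j : ℕ) = 0 then 1 else 0

/-- `F = A ⊗ I_m`. -/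
def Fmat (n m : ℕ) (A : Matrix (Fin n) (Fin n) ℝ) :
    Matrix (Fin n × Fin m) (Fin n × Fin m) ℝ :=
  A ⊗ₖ (1 : Matrix (Fin m) (Fin m) ℝ)

/-- `H = C ⊗ V̄`. -/
def Hmat (n m : ℕ) : Matrix (Fin 1 × Fin (m-1)) (Fin n × Fin m) ℝ :=
  Cmat n ⊗ₖ Vbar m

/-- `F_oo = A ⊗ I_{m-1}`. -/
def Foo (n m : ℕ) (A : Matrix (Fin n) (Fin n) ℝ) :
    Matrix (Fin n × Fin (m-1)) (Fin n × Fin (m-1)) ℝ :=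
  A ⊗ₖ (1 : Matrix (Fin (m-1)) (Fin (m-1)) ℝ)

/-- `H_o = C ⊗ I_{m-1}`. -/
def Ho (n m : ℕ) : Matrix (Fin 1 × Fin (m-1)) (Fin n × Fin (m-1)) ℝ :=
  Cmat n ⊗ₖ (1 : Matrix (Fin (m-1)) (Fin (m-1)) ℝ)

/-- `D = (1/m)·C(I_n ⊗ 1_mᵀ)`. -/
def Dmat (n m : ℕ) : Matrix (Fin 1) (Fin n × Fin m) ℝ :=
  (m : ℝ)⁻¹ • (Cmat n * (onesK n m)ᵀ)

/-- `I_n ⊗ V̄†`. -/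
def VdagK (n m : ℕ) : Matrix (Fin n × Fin m) (Fin n × Fin (m-1)) ℝ :=
  (1 : Matrix (Fin n) (Fin n) ℝ) ⊗ₖ Vdag m

/-- `I_n ⊗ V̄`. -/
def VbarK (n m : ℕ) : Matrix (Fin n × Fin (m-1)) (Fin n × Fin m) ℝ :=
  (1 : Matrix (Fin n) (Fin n) ℝ) ⊗ₖ Vbar m

/-- `T(Γ) = [(I_n⊗V̄†) + (I_n⊗1_m)Γ , I_n⊗1_m]`. -/
def Tmat (n m : ℕ) (Γ : Matrix (Fin n) (Fin n × Fin (m-1)) ℝ) :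
    Matrix (Fin n × Fin m) ((Fin n × Fin (m-1)) ⊕ Fin n) ℝ :=
  Matrix.fromCols (VdagK n m + onesK n m * Γ) (onesK n m)

/-- The claimed inverse of `T(Γ)`: top block-row `I_n⊗V̄`,
bottom block-row `-Γ(I_n⊗V̄) + (1/m)(I_n⊗1_mᵀ)`. -/
def Tinv (n m : ℕ) (Γ : Matrix (Fin n) (Fin n × Fin (m-1)) ℝ) :
    Matrix ((Fin n × Fin (m-1)) ⊕ Fin n) (Fin n × Fin m) ℝ :=
  Matrix.fromRows (VbarK n m) (-(Γ * VbarK n m) + (m : ℝ)⁻¹ • (onesK n m)ᵀ)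

/-- `G_j(Γ) = ((I_n⊗V̄†) + (I_n⊗1_m)Γ)·L̂_j`. -/
def Gmat (n m : ℕ) (Γ : Matrix (Fin n) (Fin n × Fin (m-1)) ℝ)
    (Lhat : ℕ → Matrix (Fin n × Fin (m-1)) (Fin 1 × Fin (m-1)) ℝ) (j : ℕ) :
    Matrix (Fin n × Fin m) (Fin 1 × Fin (m-1)) ℝ :=
  (VdagK n m + onesK n m * Γ) * Lhat j

/-- `λ_i^k(Γ) = (F + G_k(Γ)H)·(F + G_{k-1}(Γ)H)⋯(F + G_{i+1}(Γ)H)`, with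
`λ_i^k(Γ) = I` for `k ≤ i`. -/
def lam (n m : ℕ) (A : Matrix (Fin n) (Fin n) ℝ)
    (Γ : Matrix (Fin n) (Fin n × Fin (m-1)) ℝ)
    (Lhat : ℕ → Matrix (Fin n × Fin (m-1)) (Fin 1 × Fin (m-1)) ℝ) (i : ℕ) :
    ℕ → Matrix (Fin n × Fin m) (Fin n × Fin m) ℝ
  | 0 => 1
  | k + 1 => if k + 1 ≤ i then 1
      else (Fmat n m A + Gmat n m Γ Lhat (k+1) * Hmat n m) * lam n m A Γ Lhat i k

lemma Vbar_row_sum {m : ℕ} (hm : 2 ≤ m) (q : Fin (m-1)) : ∑ l : Fin m, Vbar m q l = 0 := by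
  have hq : (q : ℕ) < m - 1 := q.2
  have : ∑ l : Fin m, Vbar m q l
      = ∑ l : Fin m, ((if l = (⟨m-1, by omega⟩ : Fin m) then (-1:ℝ) else 0)
          + (if l = (⟨(q:ℕ), by omega⟩ : Fin m) then (1:ℝ) else 0)) := by
    apply Finset.sum_congr rfl
    intro l _
    simp only [Vbar, Matrix.of_apply, Fin.ext_iff]
    rcases eq_or_ne (l:ℕ) (m-1) with h | h <;> rcases eq_or_ne (l:ℕ) (q:ℕ) with h2 | h2 <;>
      simp [h, h2, Nat.ne_of_lt hq] <;> omega
  rw [this, Finset.sum_add_distrib, Finset.sum_ite_eq', Finset.sum_ite_eq']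
  simp

def Jm (m : ℕ) : Matrix (Fin (m-1)) (Fin (m-1)) ℝ := Matrix.of fun _ _ => 1

lemma Vbar_mul_transpose {m : ℕ} (hm : 2 ≤ m) :
    Vbar m * (Vbar m)ᵀ = 1 + Jm m := by
  ext i j
  have hi : (i : ℕ) < m - 1 := i.2
  have hj : (j : ℕ) < m - 1 := j.2
  have : ∀ l : Fin m, Vbar m i l * Vbar m j l
      = (if l = (⟨m-1, by omega⟩ : Fin m) then (1:ℝ) else 0)
        + (if (l:ℕ) = (i:ℕ) ∧ (l:ℕ) = (j:ℕ) then (1:ℝ) else 0) := by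
    intro l
    simp only [Vbar, Matrix.of_apply, Fin.ext_iff]
    rcases eq_or_ne (l:ℕ) (m-1) with h | h <;>
      rcases eq_or_ne (l:ℕ) (i:ℕ) with h2 | h2 <;>
      rcases eq_or_ne (l:ℕ) (j:ℕ) with h3 | h3 <;>
      simp [h, h2, h3, Nat.ne_of_lt hi, (Nat.ne_of_lt hi).symm, Nat.ne_of_lt hj, (Nat.ne_of_lt hj).symm] <;> omega
  simp only [Matrix.mul_apply, Matrix.transpose_apply]
  rw [Finset.sum_congr rfl (fun l _ => this l), Finset.sum_add_distrib,
    Finset.sum_ite_eq']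
  have h2 : ∑ l : Fin m, (if (l:ℕ) = (i:ℕ) ∧ (l:ℕ) = (j:ℕ) then (1:ℝ) else 0)
      = if i = j then 1 else 0 := by
    rcases eq_or_ne i j with h | h
    · subst h
      rw [Finset.sum_congr rfl (fun l _ => ?_), Finset.sum_ite_eq' Finset.univ
          (⟨(i:ℕ), by omega⟩ : Fin m) (fun _ => (1:ℝ))]
      · simp
      · simp [Fin.ext_iff]
    · rw [Finset.sum_congr rfl (fun l _ => ?_), Finset.sum_const_zero]
      · simp [h]
      · have : ¬((l:ℕ) = (i:ℕ) ∧ (l:ℕ) = (j:ℕ)) := by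
          rintro ⟨a, b⟩; exact h (Fin.ext (by omega))
        simp [this]
  rw [h2]
  simp [Jm, Matrix.one_apply, add_comm]

lemma Jm_mul_Jm {m : ℕ} : Jm m * Jm m = ((m-1 : ℕ) : ℝ) • Jm m := by
  ext i j
  simp [Jm, Matrix.mul_apply]

lemma one_add_Jm_mul {m : ℕ} (hm : 2 ≤ m) :
    (1 + Jm m) * (1 - (m:ℝ)⁻¹ • Jm m) = 1 := by
  have hm0 : (m:ℝ) ≠ 0 := by positivity
  have hcast : ((m-1 : ℕ) : ℝ) = (m:ℝ) - 1 := by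
    rw [Nat.cast_sub (by omega)]; simp
  have key : (m:ℝ)⁻¹ • Jm m + (m:ℝ)⁻¹ • (Jm m * Jm m) = Jm m := by
    rw [Jm_mul_Jm, hcast, smul_smul, ← add_smul]
    rw [show (m:ℝ)⁻¹ + (m:ℝ)⁻¹ * ((m:ℝ)-1) = 1 by field_simp; ring]
    simp
  rw [mul_sub, mul_one, add_mul, one_mul, Matrix.mul_smul, key]
  abel

def Vdag' (m : ℕ) : Matrix (Fin m) (Fin (m-1)) ℝ :=
  (Vbar m)ᵀ * (1 - (m:ℝ)⁻¹ • Jm m)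

lemma Vdag_eq {m : ℕ} (hm : 2 ≤ m) : Vdag m = Vdag' m := by
  rw [Vdag, Vdag', Vbar_mul_transpose hm, Matrix.inv_eq_right_inv (one_add_Jm_mul hm)]

lemma Vbar_mul_Vdag {m : ℕ} (hm : 2 ≤ m) : Vbar m * Vdag m = 1 := by
  rw [Vdag_eq hm, Vdag', ← Matrix.mul_assoc, Vbar_mul_transpose hm, one_add_Jm_mul hm]

lemma Vdag_col_sum {m : ℕ} (hm : 2 ≤ m) (q : Fin (m-1)) :
    ∑ b : Fin m, Vdag m b q = 0 := by
  rw [Vdag_eq hm, Vdag']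
  simp only [Matrix.mul_apply, Matrix.transpose_apply]
  rw [Finset.sum_comm]
  rw [Finset.sum_congr rfl (fun c _ => ?_)]
  · exact Finset.sum_const_zero
  · rw [← Finset.sum_mul, Vbar_row_sum hm, zero_mul]



variable {n : ℕ}

lemma hsum1 {α : Type*} [Fintype α] [DecidableEq α] (f : α → ℝ) (j : α) :
    (∑ a, f a * (if a = j then (1:ℝ) else 0)) = f j := by
  simp [mul_ite]

lemma VbarK_mul_VdagK (hm : 2 ≤ m) : VbarK n m * VdagK n m = 1 := by
  rw [VbarK, VdagK, ← Matrix.mul_kronecker_mul, Matrix.one_mul, Vbar_mul_Vdag hm,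
    Matrix.one_kronecker_one]

lemma VbarK_mul_onesK (hm : 2 ≤ m) : VbarK n m * onesK n m = 0 := by
  ext ⟨p, q⟩ j
  simp only [VbarK, onesK, Matrix.mul_apply, Matrix.kroneckerMap_apply, Matrix.of_apply,
    Fintype.sum_prod_type, Matrix.zero_apply]
  rw [Finset.sum_comm]
  rw [Finset.sum_congr rfl (fun b _ => hsum1 (fun a => (1 : Matrix (Fin n) (Fin n) ℝ) p a * Vbar m q b) j)]
  rw [← Finset.mul_sum, Vbar_row_sum hm, mul_zero]

lemma onesKT_mul_VdagK (hm : 2 ≤ m) : (onesK n m)ᵀ * VdagK n m = 0 := by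
  ext j ⟨p, q⟩
  simp only [VdagK, onesK, Matrix.mul_apply, Matrix.transpose_apply,
    Matrix.kroneckerMap_apply, Matrix.of_apply, Fintype.sum_prod_type, Matrix.zero_apply]
  rw [Finset.sum_congr rfl (fun a _ => ?_), Finset.sum_ite_eq' Finset.univ j
      (fun a => (1 : Matrix (Fin n) (Fin n) ℝ) a p * ∑ b, Vdag m b q)]
  · simp [Vdag_col_sum hm]
  · rcases eq_or_ne a j with h | h <;> simp [h, Finset.mul_sum]

lemma onesKT_mul_onesK : (onesK n m)ᵀ * onesK n m = (m:ℝ) • 1 := by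
  ext j p
  simp only [onesK, Matrix.mul_apply, Matrix.transpose_apply, Matrix.of_apply,
    Fintype.sum_prod_type, Matrix.smul_apply, Matrix.one_apply]
  rcases eq_or_ne j p with h | h
  · subst h; simp [mul_ite]
  · simp [h, Ne.symm h, mul_ite]

lemma onesKT_mul_Fmat (A : Matrix (Fin n) (Fin n) ℝ) :
    (onesK n m)ᵀ * Fmat n m A = A * (onesK n m)ᵀ := by
  ext j ⟨p, q⟩
  simp only [Fmat, onesK, Matrix.mul_apply, Matrix.transpose_apply,
    Matrix.kroneckerMap_apply, Matrix.of_apply, Fintype.sum_prod_type]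
  simp [Matrix.one_apply, Finset.sum_ite_eq', ite_mul, eq_comm]

lemma Hmat_mul_onesK (hm : 2 ≤ m) : Hmat n m * onesK n m = 0 := by
  ext ⟨u, q⟩ j
  simp only [Hmat, onesK, Matrix.mul_apply, Matrix.kroneckerMap_apply, Matrix.of_apply,
    Fintype.sum_prod_type, Matrix.zero_apply]
  rw [Finset.sum_comm]
  rw [Finset.sum_congr rfl (fun b _ => hsum1 (fun a => Cmat n u a * Vbar m q b) j)]
  rw [← Finset.mul_sum, Vbar_row_sum hm, mul_zero]

lemma VbarK_mul_Fmat (A : Matrix (Fin n) (Fin n) ℝ) :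
    VbarK n m * Fmat n m A = Foo n m A * VbarK n m := by
  rw [VbarK, Fmat, Foo, ← Matrix.mul_kronecker_mul, ← Matrix.mul_kronecker_mul,
    Matrix.one_mul, Matrix.mul_one, Matrix.one_mul, Matrix.mul_one]

lemma Ho_mul_VbarK : Ho n m * VbarK n m = Hmat n m := by
  rw [Ho, VbarK, Hmat, ← Matrix.mul_kronecker_mul, Matrix.mul_one, Matrix.one_mul]

variable {A : Matrix (Fin n) (Fin n) ℝ} {Γ : Matrix (Fin n) (Fin n × Fin (m-1)) ℝ}
  {Lhat : ℕ → Matrix (Fin n × Fin (m-1)) (Fin 1 × Fin (m-1)) ℝ}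

lemma VbarK_mul_closed (hm : 2 ≤ m) (A : Matrix (Fin n) (Fin n) ℝ)
    (Γ : Matrix (Fin n) (Fin n × Fin (m-1)) ℝ)
    (Lhat : ℕ → Matrix (Fin n × Fin (m-1)) (Fin 1 × Fin (m-1)) ℝ) (j : ℕ) :
    VbarK n m * (Fmat n m A + Gmat n m Γ Lhat j * Hmat n m)
      = (Foo n m A + Lhat j * Ho n m) * VbarK n m := by
  rw [Matrix.mul_add, Matrix.add_mul, VbarK_mul_Fmat, Gmat, ← Matrix.mul_assoc,
    ← Matrix.mul_assoc, Matrix.mul_add, VbarK_mul_VdagK hm, ← Matrix.mul_assoc,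
    VbarK_mul_onesK hm, Matrix.zero_mul, add_zero, Matrix.one_mul, Matrix.mul_assoc,
    Ho_mul_VbarK]

lemma lam_of_le (i k : ℕ) (h : k ≤ i) : lam n m A Γ Lhat i k = 1 := by
  cases k with
  | zero => rfl
  | succ k => rw [lam, if_pos h]

lemma VbarK_mul_lam (hm : 2 ≤ m) (i k : ℕ) :
    VbarK n m * lam n m A Γ Lhat i k = VbarK n m * lam n m A 0 Lhat i k := by
  induction k with
  | zero => rfl
  | succ k IH =>
    rw [lam, lam]
    by_cases h : k + 1 ≤ i
    · rw [if_pos h, if_pos h]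
    · rw [if_neg h, if_neg h, ← Matrix.mul_assoc, ← Matrix.mul_assoc,
        VbarK_mul_closed hm, VbarK_mul_closed hm, Matrix.mul_assoc, Matrix.mul_assoc, IH]

lemma Hmat_mul_lam (hm : 2 ≤ m) (i k : ℕ) :
    Hmat n m * lam n m A Γ Lhat i k = Hmat n m * lam n m A 0 Lhat i k := by
  rw [← Ho_mul_VbarK, Matrix.mul_assoc, Matrix.mul_assoc, VbarK_mul_lam hm]

lemma onesKT_mul_Gmat (hm : 2 ≤ m) (j : ℕ) :
    (onesK n m)ᵀ * Gmat n m Γ Lhat j = (m:ℝ) • (Γ * Lhat j) := by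
  rw [Gmat, ← Matrix.mul_assoc, Matrix.mul_add, onesKT_mul_VdagK hm, ← Matrix.mul_assoc,
    onesKT_mul_onesK, zero_add, Matrix.smul_mul, Matrix.smul_mul, Matrix.one_mul]

lemma onesKT_step (hm : 2 ≤ m) (j : ℕ) (X : Matrix (Fin n × Fin m) (Fin n × Fin m) ℝ) :
    (onesK n m)ᵀ * ((Fmat n m A + Gmat n m Γ Lhat j * Hmat n m) * X)
      = A * ((onesK n m)ᵀ * X) + (m:ℝ) • (Γ * Lhat j * (Hmat n m * X)) := by
  rw [← Matrix.mul_assoc, Matrix.mul_add, onesKT_mul_Fmat, ← Matrix.mul_assoc,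
    onesKT_mul_Gmat hm, Matrix.add_mul, Matrix.mul_assoc, Matrix.smul_mul,
    Matrix.mul_assoc, Matrix.mul_assoc]
  simp [Matrix.mul_assoc, Matrix.smul_mul]

lemma key (hm : 2 ≤ m) (i k : ℕ) (hik : i < k) :
    (m:ℝ)⁻¹ • ((onesK n m)ᵀ * lam n m A Γ Lhat i k)
      = (∑ δ ∈ Finset.range (k - i),
          A ^ δ * Γ * Lhat (k - δ) * (Hmat n m * lam n m A 0 Lhat i (k - δ - 1)))
        + (m:ℝ)⁻¹ • (A ^ (k - i) * (onesK n m)ᵀ) := by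
  have hm0 : (m:ℝ) ≠ 0 := by positivity
  induction k, hik using Nat.le_induction with
  | base =>
    rw [show i+1-i = 1 by omega, lam, if_neg (by omega), lam_of_le i i le_rfl,
      onesKT_step hm, Matrix.mul_one, Matrix.mul_one, smul_add, smul_smul,
      inv_mul_cancel₀ hm0, one_smul, Finset.sum_range_one, pow_zero, Matrix.one_mul,
      Nat.sub_zero, Nat.succ_sub_one, lam_of_le i i le_rfl, Matrix.mul_one, pow_one,
      add_comm]
  | succ k hk IH =>
    rw [lam, if_neg (by omega), onesKT_step hm, smul_add, smul_smul,
      inv_mul_cancel₀ hm0, one_smul, Hmat_mul_lam hm, ← Matrix.mul_smul, IH,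
      Matrix.mul_add, Matrix.mul_sum, Matrix.mul_smul,
      show k+1-i = (k-i)+1 by omega, Finset.sum_range_succ']
    have h1 : ∀ δ ∈ Finset.range (k-i),
        A * (A ^ δ * Γ * Lhat (k - δ) * (Hmat n m * lam n m A 0 Lhat i (k - δ - 1)))
          = A ^ (δ+1) * Γ * Lhat (k+1-(δ+1)) * (Hmat n m * lam n m A 0 Lhat i (k+1-(δ+1)-1)) := by
      intro δ hδ
      rw [show k+1-(δ+1) = k-δ by omega]
      simp only [← Matrix.mul_assoc]
      rw [← pow_succ']
    rw [Finset.sum_congr rfl h1]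
    simp only [Nat.sub_zero, pow_zero, Matrix.one_mul, Nat.add_sub_cancel,
      ← Matrix.mul_assoc]
    rw [← pow_succ']
    abel

/-- **identity (17).** For `i < k`,
`D·λ_i^k(Γ) = C·Σ_{δ=0}^{k-i-1} A^δ Γ L̂_{k-δ} Φ_{k-δ}^i + (1/m)·C A^{k-i}(I_n⊗1_mᵀ)`,
where `Φ_s^i = H·λ_i^{s-1}(0)` is the closed-loop product at `Γ = 0` multiplied by `H`.
In particular `Γ ↦ D·λ_i^k(Γ)` is affine in `Γ`. -/
theorem stmt_15 (n m : ℕ) (hn : 1 ≤ n) (hm : 2 ≤ m)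
    (A : Matrix (Fin n) (Fin n) ℝ)
    (Γ : Matrix (Fin n) (Fin n × Fin (m-1)) ℝ)
    (Lhat : ℕ → Matrix (Fin n × Fin (m-1)) (Fin 1 × Fin (m-1)) ℝ)
    (i k : ℕ) (hik : i < k) :
    Dmat n m * lam n m A Γ Lhat i k =
      Cmat n *
        (∑ δ ∈ Finset.range (k - i),
          A ^ δ * Γ * Lhat (k - δ) * (Hmat n m * lam n m A 0 Lhat i (k - δ - 1))) +
      (m : ℝ)⁻¹ • (Cmat n * A ^ (k - i) * (onesK n m)ᵀ) := by
  rw [Dmat, Matrix.smul_mul, Matrix.mul_assoc, ← Matrix.mul_smul, key hm i k hik,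
    Matrix.mul_add, Matrix.mul_smul, ← Matrix.mul_assoc]
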